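/- arXiv:1308.5359 — 6 statements merged into one kernel-verified Lean document; each statement's English description precedes it below -/
import Mathlib

section
/- Let N ≥ 1, γ ≥ 0, t ≥ 0, let ρ be an (N+1)×(N+1) complex matrix, and let J be the diagonal (N+1)×(N+1) real matrix with diagonal entries J_{kk} = (2k-N)/2. Define Γ_t ρ entrywise by (Γ_t ρ)_{kℓ} = e^{-γ t (k-ℓ)²/2} ρ_{kℓ}. Then Γ_t ρ admits the continuous Kraus representation Γ_t ρ = (1/(2√π)) ∫_{-∞}^{+∞} e^{-u²/4} e^{-i √(γt/2) u J} ρ e^{i √(γt/2) u J} du, where the integral of the matrix-valued integrand is taken entrywise (Bochner integral). -/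
open MeasureTheory Complex

/-!
Conjugating `ρ` by the diagonal unitaries `e^{∓iθuJ}` multiplies the entry `ρ_{kℓ}` by the
phase `e^{iθ(ℓ-k)u}`, since `J_ℓ - J_k = ℓ - k`. Averaging this phase against the Gaussian
weight `e^{-u²/4}` is the characteristic function of a Gaussian,
`∫ e^{-u²/4} e^{isu} du = 2√π e^{-s²}`, and with `s = θ(ℓ-k)`, `θ² = γt/2` this is the damping
factor `e^{-γt(k-ℓ)²/2}`.
-/

theorem integral_gaussian_mul_cexp_I_mul {b : ℝ} (hb : 0 < b) (s : ℝ) :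
    ∫ u : ℝ, ((Real.exp (-b * u ^ 2) : ℝ) : ℂ) * cexp (I * s * u) =
      ((Real.sqrt (Real.pi / b) * Real.exp (-s ^ 2 / (4 * b)) : ℝ) : ℂ) := by
  have hgauss := fourierIntegral_gaussian (b := (b : ℂ)) (by simpa using hb) (s : ℂ)
  have hsqrt : ((Real.pi : ℂ) / b) ^ (1 / 2 : ℂ) = ((Real.sqrt (Real.pi / b) : ℝ) : ℂ) := by
    rw [Real.sqrt_eq_rpow, Complex.ofReal_cpow (by positivity)]
    norm_num
  simp_rw [mul_comm (((Real.exp _ : ℝ)) : ℂ), Complex.ofReal_exp]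
  rw [hsqrt] at hgauss
  push_cast
  exact hgauss

theorem cexp_neg_mul_mul_cexp_mul {θ u a c : ℝ} :
    cexp (-I * θ * u * a) * cexp (I * θ * u * c) = cexp (I * ↑(θ * (c - a)) * u) := by
  rw [← Complex.exp_add]
  push_cast
  congr 1
  ring

theorem dephasing_kraus_representation_general (N : ℕ) (γ t : ℝ)
    (hγ : 0 ≤ γ) (ht : 0 ≤ t) (ρ : Matrix (Fin (N + 1)) (Fin (N + 1)) ℂ) :
    let θ : ℝ := Real.sqrt (γ * t / 2)
    let U : ℝ → Matrix (Fin (N + 1)) (Fin (N + 1)) ℂ := fun u =>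
      Matrix.diagonal fun k =>
        Complex.exp (-Complex.I * (θ : ℂ) * (u : ℂ) * (((2 * (k : ℝ) - (N : ℝ)) / 2 : ℝ) : ℂ))
    let V : ℝ → Matrix (Fin (N + 1)) (Fin (N + 1)) ℂ := fun u =>
      Matrix.diagonal fun k =>
        Complex.exp (Complex.I * (θ : ℂ) * (u : ℂ) * (((2 * (k : ℝ) - (N : ℝ)) / 2 : ℝ) : ℂ))
    ∀ k ℓ : Fin (N + 1),
      ((Real.exp (-(γ * t * ((k : ℝ) - (ℓ : ℝ)) ^ 2) / 2) : ℝ) : ℂ) * ρ k ℓ =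
        (1 / (2 * Real.sqrt Real.pi) : ℂ) *
          ∫ u : ℝ, ((Real.exp (-u ^ 2 / 4) : ℝ) : ℂ) * ((U u * ρ * V u) k ℓ) := by
  intro θ U V k ℓ
  have hentry (u : ℝ) : ((Real.exp (-u ^ 2 / 4) : ℝ) : ℂ) * ((U u * ρ * V u) k ℓ) =
      ρ k ℓ * (((Real.exp (-(1 / 4) * u ^ 2) : ℝ) : ℂ) * cexp (I * ↑(θ * (ℓ - k : ℝ)) * u)) := by
    simp only [U, V, Matrix.mul_diagonal, Matrix.diagonal_mul]
    rw [mul_right_comm _ (ρ k ℓ), cexp_neg_mul_mul_cexp_mul]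
    ring_nf
  have hθ : θ ^ 2 = γ * t / 2 := Real.sq_sqrt (by positivity)
  have hsqrt : Real.sqrt (Real.pi / (1 / 4)) = 2 * Real.sqrt Real.pi := by
    rw [show Real.pi / (1 / 4) = 2 ^ 2 * Real.pi by ring, Real.sqrt_mul (by norm_num),
      Real.sqrt_sq (by norm_num)]
  simp_rw [hentry, integral_const_mul, integral_gaussian_mul_cexp_I_mul (by norm_num : (0:ℝ) < 1 / 4),
    hsqrt, mul_pow, hθ]
  have hpi : (Real.sqrt Real.pi : ℂ) ≠ 0 := by exact_mod_cast (Real.sqrt_pos.2 Real.pi_pos).ne'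
  push_cast
  field_simp
  ring_nf

/-- For `N ≥ 1`, `γ, t ≥ 0` and an `(N+1)×(N+1)` complex matrix `ρ`, the dephased matrix
`(Γ_t ρ)_{kℓ} = e^{-γt(k-ℓ)²/2} ρ_{kℓ}` admits the continuous Kraus representation
`Γ_t ρ = (1/(2√π)) ∫ℝ e^{-u²/4} e^{-i√(γt/2)uJ} ρ e^{i√(γt/2)uJ} du` (entrywise Bochner
integral), where `J` is diagonal with entries `(2k-N)/2` and `e^{±iθJ}` are the corresponding
diagonal unitaries. -/
theorem dephasing_kraus_representation (N : ℕ) (hN : 1 ≤ N) (γ t : ℝ)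
    (hγ : 0 ≤ γ) (ht : 0 ≤ t) (ρ : Matrix (Fin (N + 1)) (Fin (N + 1)) ℂ) :
    let θ : ℝ := Real.sqrt (γ * t / 2)
    let U : ℝ → Matrix (Fin (N + 1)) (Fin (N + 1)) ℂ := fun u =>
      Matrix.diagonal fun k =>
        Complex.exp (-Complex.I * (θ : ℂ) * (u : ℂ) * (((2 * (k : ℝ) - (N : ℝ)) / 2 : ℝ) : ℂ))
    let V : ℝ → Matrix (Fin (N + 1)) (Fin (N + 1)) ℂ := fun u =>
      Matrix.diagonal fun k =>
        Complex.exp (Complex.I * (θ : ℂ) * (u : ℂ) * (((2 * (k : ℝ) - (N : ℝ)) / 2 : ℝ) : ℂ))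
    ∀ k ℓ : Fin (N + 1),
      ((Real.exp (-(γ * t * ((k : ℝ) - (ℓ : ℝ)) ^ 2) / 2) : ℝ) : ℂ) * ρ k ℓ =
        (1 / (2 * Real.sqrt Real.pi) : ℂ) *
          ∫ u : ℝ, ((Real.exp (-u ^ 2 / 4) : ℝ) : ℂ) * ((U u * ρ * V u) k ℓ) :=
  dephasing_kraus_representation_general N γ t hγ ht ρ
end

section
/- Let N ≥ 0 and let ρ be an (N+1)×(N+1) complex matrix. With B the partial-transpose matrix defined by B_{(p,q),(r,s)} = ρ_{q p} if q = r and p = s, and 0 otherwise, the trace norm of B satisfies ‖B‖₁ = Σ_{k,ℓ=0}^{N} |ρ_{kℓ}|. Consequently, if in addition ρ is positive semidefinite with trace 1, the negativity 𝒩(ρ) := (‖B‖₁ − 1)/2 equals (1/2) Σ_{k≠ℓ} |ρ_{kℓ}|. -/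
/-!
The partial transpose `B` has exactly one nonzero entry `ρ_{qp}` in each row `(p, q)`, sitting
in column `(q, p)`: it is a diagonal matrix with its columns permuted by the swap. Hence `Bᴴ B`
is diagonal with entries `|ρ_{kℓ}|²`, its positive square root is the diagonal matrix of the
`|ρ_{kℓ}|` (uniqueness of positive square roots), and `‖B‖₁ = Σ |ρ_{kℓ}|`. For a density matrix
the diagonal part of this sum is `Tr ρ = 1`, which leaves the off-diagonal part for `2 𝒩(ρ)`.
-/

open scoped ComplexOrder

/-- The square root of a positive semidefinite matrix, as `Matrix.PosSemidef.sqrt` was defined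
in the older Mathlib (removed since). -/
noncomputable def Matrix.PosSemidef.sqrt {n 𝕜 : Type*} [Fintype n] [DecidableEq n] [RCLike 𝕜]
    {A : Matrix n n 𝕜} (hA : A.PosSemidef) : Matrix n n 𝕜 :=
  (hA.1.eigenvectorUnitary : Matrix n n 𝕜) *
    Matrix.diagonal (fun i => ((Real.sqrt (hA.1.eigenvalues i) : ℝ) : 𝕜)) *
    (star hA.1.eigenvectorUnitary : Matrix n n 𝕜)

theorem Fintype.sum_sum_eq_sum_diag_add_sum_sum_offDiag {ι M : Type*} [Fintype ι]
    [DecidableEq ι] [AddCommMonoid M] (g : ι → ι → M) :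
    ∑ k, ∑ l, g k l = ∑ k, g k k + ∑ k, ∑ l, if k = l then 0 else g k l := by
  rw [← Finset.sum_add_distrib]
  refine Finset.sum_congr rfl fun k _ => ?_
  rw [Fintype.sum_eq_add_sum_compl k (g k), Fintype.sum_eq_add_sum_compl k
    (fun l => if k = l then 0 else g k l), if_pos rfl, zero_add]
  congr 1
  refine Finset.sum_congr rfl fun l hl => (if_neg ?_).symm
  exact fun h => by simp [h] at hl

namespace Matrix

variable {n m 𝕜 : Type*} [Fintype n] [RCLike 𝕜]

open scoped MatrixOrder in
theorem PosSemidef.sqrt_eq_cfcSqrt [DecidableEq n] {A : Matrix n n 𝕜} (hA : A.PosSemidef) :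
    hA.sqrt = CFC.sqrt A := by
  rw [CFC.sqrt_eq_cfc, cfc_nnreal_eq_real _ _ (nonneg_iff_posSemidef.mpr hA), hA.1.cfc_eq]
  simp [IsHermitian.cfc, PosSemidef.sqrt, Function.comp_def,
    max_eq_left (hA.eigenvalues_nonneg _)]

open scoped MatrixOrder in
theorem PosSemidef.sqrt_eq_of_mul_self_eq [DecidableEq n] {A D : Matrix n n 𝕜}
    (hA : A.PosSemidef) (hD : D.PosSemidef) (h : D * D = A) : hA.sqrt = D := by
  rw [hA.sqrt_eq_cfcSqrt]
  exact CFC.sqrt_unique h (nonneg_iff_posSemidef.mpr hD)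

theorem conjTranspose_mul_self_diagonal_submatrix [DecidableEq n] [Fintype m] [DecidableEq m]
    (f : n → 𝕜) (e : m ≃ n) :
    ((diagonal f).submatrix id e)ᴴ * (diagonal f).submatrix id e =
      diagonal fun i => ((‖f (e i)‖ ^ 2 : ℝ) : 𝕜) := by
  rw [conjTranspose_submatrix]
  refine (submatrix_mul_equiv _ _ _ (Equiv.refl n) _).trans ?_
  rw [diagonal_conjTranspose, diagonal_mul_diagonal, submatrix_diagonal_equiv]
  congr 1
  ext i
  simp [RCLike.conj_mul]

theorem trace_sqrt_conjTranspose_mul_self_diagonal_submatrix [DecidableEq n] [Fintype m]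
    [DecidableEq m] (f : n → 𝕜) (e : m ≃ n) :
    (posSemidef_conjTranspose_mul_self ((diagonal f).submatrix id e)).sqrt.trace =
      ((∑ i, ‖f i‖ : ℝ) : 𝕜) := by
  have hD : (diagonal fun i => ((‖f (e i)‖ : ℝ) : 𝕜)).PosSemidef :=
    PosSemidef.diagonal fun i => by simp
  rw [PosSemidef.sqrt_eq_of_mul_self_eq _ hD (by
      rw [conjTranspose_mul_self_diagonal_submatrix, diagonal_mul_diagonal]; simp [sq]),
    trace_diagonal, ← e.sum_comp]
  push_cast; rfl

theorem PosSemidef.sum_norm_diag_eq_re_trace {A : Matrix n n 𝕜} (hA : A.PosSemidef) :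
    ∑ k, ‖A k k‖ = RCLike.re A.trace := by
  rw [trace, map_sum]
  refine Finset.sum_congr rfl fun k _ => ?_
  obtain ⟨r, hr, hk⟩ := RCLike.nonneg_iff_exists_ofReal.mp (hA.diag_nonneg (i := k))
  simp [← hk, hr]

end Matrix

/-- For an `(N+1)×(N+1)` complex matrix `ρ`, with `B` the partial-transpose matrix
(`B_{(p,q),(r,s)} = ρ_{qp}` if `q = r` and `p = s`, else `0`), the trace norm
`‖B‖₁ = Tr √(Bᴴ B)` equals `Σ_{k,ℓ} |ρ_{kℓ}|`; consequently, if `ρ` is positive semidefinite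
with trace `1`, the negativity `𝒩(ρ) = (‖B‖₁ − 1)/2` equals `(1/2) Σ_{k≠ℓ} |ρ_{kℓ}|`. -/
theorem partial_transpose_trace_norm_and_negativity (N : ℕ)
    (ρ : Matrix (Fin (N + 1)) (Fin (N + 1)) ℂ) :
    let B : Matrix (Fin (N + 1) × Fin (N + 1)) (Fin (N + 1) × Fin (N + 1)) ℂ :=
      Matrix.of fun x y => if x.2 = y.1 ∧ x.1 = y.2 then ρ x.2 x.1 else 0
    ((Matrix.PosSemidef.sqrt (Matrix.posSemidef_conjTranspose_mul_self B)).trace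
        = ((∑ k : Fin (N + 1), ∑ ℓ : Fin (N + 1), ‖ρ k ℓ‖ : ℝ) : ℂ)) ∧
    (ρ.PosSemidef → ρ.trace = 1 →
      (((Matrix.PosSemidef.sqrt (Matrix.posSemidef_conjTranspose_mul_self B)).trace.re - 1) / 2
        = (1 / 2 : ℝ) * ∑ k : Fin (N + 1), ∑ ℓ : Fin (N + 1),
            if k = ℓ then 0 else ‖ρ k ℓ‖)) := by
  intro B
  have hB : B = (Matrix.diagonal fun x => ρ x.2 x.1).submatrix id (Equiv.prodComm _ _) := by
    ext x y
    simp [B, Matrix.diagonal_apply, Prod.ext_iff, and_comm]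
  have hnorm : (Matrix.PosSemidef.sqrt (Matrix.posSemidef_conjTranspose_mul_self B)).trace
      = ((∑ k : Fin (N + 1), ∑ ℓ : Fin (N + 1), ‖ρ k ℓ‖ : ℝ) : ℂ) := by
    rw [hB, Matrix.trace_sqrt_conjTranspose_mul_self_diagonal_submatrix, Fintype.sum_prod_type,
      Finset.sum_comm]
    rfl
  refine ⟨hnorm, fun hρ htr => ?_⟩
  rw [hnorm, Complex.ofReal_re, Fintype.sum_sum_eq_sum_diag_add_sum_sum_offDiag,
    hρ.sum_norm_diag_eq_re_trace, htr, RCLike.one_re]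
  ring
end

section
/- Let N ≥ 1 and let A be the symmetric tridiagonal (N+1)×(N+1) real matrix with zero diagonal and off-diagonal entries A_{k,k+1} = A_{k+1,k} = (1/2)√((k+1)(N−k)) for k ∈ {0,…,N−1}. Then for every k ∈ {0,…,N}, the diagonal entry (A²)_{kk} equals (N + 2k(N−k))/4. Consequently the variance ⟨e_k, A² e_k⟩ − ⟨e_k, A e_k⟩² of A in the standard basis vector e_k equals (N + 2k(N−k))/4, so the quantum Fisher information 4·variance equals N + 2k(N−k), exceeding N for all 0 < k < N. -/
/-!
The matrix is the symmetric tridiagonal matrix with zero diagonal and off-diagonal weights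
`b m = √((m+1)(N-m)) / 2`, so `(A²)ₖₖ = b k ² + b (k-1) ²`, the two squared neighbours of `k`.
Both squares are values of the polynomial `c(x) = (x+1)(N-x)/4`, which vanishes at `x = N` and
`x = -1`, so the boundary rows, which miss one neighbour, obey the same formula
`c(k) + c(k-1) = (N + 2k(N-k))/4`.
-/

open Finset

namespace Matrix

variable {R : Type*} [Semiring R] {n : ℕ}

def symmTridiagonal (b : ℕ → R) : Matrix (Fin n) (Fin n) R :=
  of fun k l => if (k : ℕ) + 1 = l then b k else if (l : ℕ) + 1 = k then b l else 0

theorem symmTridiagonal_apply_self (b : ℕ → R) (k : Fin n) :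
    symmTridiagonal b k k = 0 := by
  simp [symmTridiagonal]

theorem sum_symmTridiagonal_superdiag (b : ℕ → R) (k : Fin n) :
    ∑ j : Fin n, (if (k : ℕ) + 1 = j then b k ^ 2 else 0) =
      if (k : ℕ) + 1 < n then b k ^ 2 else 0 := by
  split_ifs with hk
  · rw [sum_eq_single_of_mem ⟨(k : ℕ) + 1, hk⟩ (mem_univ _)]
    · simp
    · intro j _ hj
      exact if_neg fun h => hj (Fin.ext h.symm)
  · exact sum_eq_zero fun j _ => if_neg (by omega)

theorem sum_symmTridiagonal_subdiag (b : ℕ → R) (k : Fin n) :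
    ∑ j : Fin n, (if (j : ℕ) + 1 = k then b j ^ 2 else 0) =
      if 0 < (k : ℕ) then b ((k : ℕ) - 1) ^ 2 else 0 := by
  split_ifs with hk
  · rw [sum_eq_single_of_mem ⟨(k : ℕ) - 1, by omega⟩ (mem_univ _)]
    · simp only [Nat.sub_add_cancel hk, if_true]
    · intro j _ hj
      exact if_neg fun h => hj (Fin.ext (by simp; omega))
  · exact sum_eq_zero fun j _ => if_neg (by omega)

theorem symmTridiagonal_mul_self_apply_self (b : ℕ → R) (k : Fin n) :
    (symmTridiagonal b * symmTridiagonal b : Matrix (Fin n) (Fin n) R) k k =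
      (if (k : ℕ) + 1 < n then b k ^ 2 else 0) +
        if 0 < (k : ℕ) then b ((k : ℕ) - 1) ^ 2 else 0 := by
  have hterm : ∀ j : Fin n, symmTridiagonal b k j * symmTridiagonal b j k =
      (if (k : ℕ) + 1 = j then b k ^ 2 else 0) + if (j : ℕ) + 1 = k then b j ^ 2 else 0 := by
    intro j
    simp only [symmTridiagonal, of_apply]
    split_ifs <;> first | omega | simp [sq]
  rw [mul_apply, sum_congr rfl fun j _ => hterm j, sum_add_distrib,
    sum_symmTridiagonal_superdiag, sum_symmTridiagonal_subdiag]

end Matrix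

open Matrix

/-- The off-diagonal entry `⟨k+1, N-k-1| J_x |k, N-k⟩ = √((k+1)(N-k)) / 2`. -/
noncomputable def jxOffDiag (N m : ℕ) : ℝ :=
  (1 / 2) * Real.sqrt (((m : ℝ) + 1) * ((N : ℝ) - m))

theorem jxOffDiag_sq {N m : ℕ} (hm : m ≤ N) :
    jxOffDiag N m ^ 2 = ((m : ℝ) + 1) * ((N : ℝ) - m) / 4 := by
  have hmN : (m : ℝ) ≤ N := by exact_mod_cast hm
  rw [jxOffDiag, mul_pow, Real.sq_sqrt (by nlinarith)]
  ring

theorem jxOffDiag_neighbours_sq {N k : ℕ} (hk : k ≤ N) :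
    ((if k + 1 < N + 1 then jxOffDiag N k ^ 2 else 0) +
        if 0 < k then jxOffDiag N (k - 1) ^ 2 else 0) =
      ((N : ℝ) + 2 * k * ((N : ℝ) - k)) / 4 := by
  split_ifs with hsup hsub hsub
  · rw [jxOffDiag_sq (by omega), jxOffDiag_sq (by omega), Nat.cast_pred hsub]
    ring
  · obtain rfl : k = 0 := by omega
    rw [jxOffDiag_sq hk]
    simp
  · obtain rfl : k = N := by omega
    rw [jxOffDiag_sq (by omega), Nat.cast_pred hsub]
    ring
  · obtain rfl : k = 0 := by omega
    obtain rfl : N = 0 := by omega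
    simp

theorem tridiagonal_Jx_variance_general (N : ℕ) :
    let A : Matrix (Fin (N + 1)) (Fin (N + 1)) ℝ :=
      Matrix.of fun k ℓ =>
        if (k : ℕ) + 1 = (ℓ : ℕ) then (1 / 2) * Real.sqrt (((k : ℝ) + 1) * ((N : ℝ) - (k : ℝ)))
        else if (ℓ : ℕ) + 1 = (k : ℕ) then
          (1 / 2) * Real.sqrt (((ℓ : ℝ) + 1) * ((N : ℝ) - (ℓ : ℝ)))
        else 0
    ∀ k : Fin (N + 1),
      (A * A) k k = ((N : ℝ) + 2 * (k : ℝ) * ((N : ℝ) - (k : ℝ))) / 4 ∧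
      4 * ((A * A) k k - (A k k) ^ 2) = (N : ℝ) + 2 * (k : ℝ) * ((N : ℝ) - (k : ℝ)) ∧
      (0 < (k : ℕ) → (k : ℕ) < N →
        (N : ℝ) < (N : ℝ) + 2 * (k : ℝ) * ((N : ℝ) - (k : ℝ))) := by
  intro A k
  have hA : A = symmTridiagonal (jxOffDiag N) := rfl
  have hdiag : (A * A) k k = ((N : ℝ) + 2 * (k : ℝ) * ((N : ℝ) - (k : ℝ))) / 4 := by
    rw [hA, symmTridiagonal_mul_self_apply_self, jxOffDiag_neighbours_sq (Fin.is_le k)]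
  refine ⟨hdiag, ?_, fun hk0 hkN => ?_⟩
  · rw [hdiag, hA, symmTridiagonal_apply_self]
    ring
  · have hk0' : (0 : ℝ) < k := by exact_mod_cast hk0
    have hkN' : (k : ℝ) < N := by exact_mod_cast hkN
    nlinarith

/-- For `N ≥ 1`, let `A` be the symmetric tridiagonal `(N+1)×(N+1)` real matrix with zero
diagonal and off-diagonal entries `A_{k,k+1} = A_{k+1,k} = (1/2)√((k+1)(N-k))`. Then for every
`k`, `(A²)_{kk} = (N + 2k(N-k))/4`; consequently the variance `⟨e_k, A²e_k⟩ - ⟨e_k, Ae_k⟩²`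
equals `(N + 2k(N-k))/4`, so the quantum Fisher information `4·variance` equals
`N + 2k(N-k)`, exceeding `N` for all `0 < k < N`. -/
theorem tridiagonal_Jx_variance (N : ℕ) (hN : 1 ≤ N) :
    let A : Matrix (Fin (N + 1)) (Fin (N + 1)) ℝ :=
      Matrix.of fun k ℓ =>
        if (k : ℕ) + 1 = (ℓ : ℕ) then (1 / 2) * Real.sqrt (((k : ℝ) + 1) * ((N : ℝ) - (k : ℝ)))
        else if (ℓ : ℕ) + 1 = (k : ℕ) then
          (1 / 2) * Real.sqrt (((ℓ : ℝ) + 1) * ((N : ℝ) - (ℓ : ℝ)))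
        else 0
    ∀ k : Fin (N + 1),
      (A * A) k k = ((N : ℝ) + 2 * (k : ℝ) * ((N : ℝ) - (k : ℝ))) / 4 ∧
      4 * ((A * A) k k - (A k k) ^ 2) = (N : ℝ) + 2 * (k : ℝ) * ((N : ℝ) - (k : ℝ)) ∧
      (0 < (k : ℕ) → (k : ℕ) < N →
        (N : ℝ) < (N : ℝ) + 2 * (k : ℝ) * ((N : ℝ) - (k : ℝ))) :=
  tridiagonal_Jx_variance_general N
end

section
/- For every natural number N ≥ 0 and every μ ≥ 0, 2^{-2N} Σ_{k=0}^{N} Σ_{ℓ=0}^{N} binom(N,k) binom(N,ℓ) e^{-μ (k−ℓ)²} = ∫_{-∞}^{+∞} (e^{-u²}/√π) cos^{2N}(u√μ) du. -/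
/-!
Write `2 cos x = e^{ix} + e^{-ix}`; by the binomial theorem `(2 cos x)^N = Σ_k C(N,k) e^{i(2k-N)x}`,
a real number, so `(2 cos x)^{2N}` is its squared modulus `Σ_{k,ℓ} C(N,k) C(N,ℓ) cos(2(k-ℓ)x)`.
Integrating each term against the Gaussian, `∫ e^{-u²} cos(tu) du = √π e^{-t²/4}`, turns
`cos(2(k-ℓ)u√μ)` into `e^{-μ(k-ℓ)²}`.
-/

open MeasureTheory Real Finset

theorem integrable_exp_neg_mul_sq_mul_cos {b : ℝ} (hb : 0 < b) (t : ℝ) :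
    Integrable fun x : ℝ => exp (-b * x ^ 2) * cos (t * x) :=
  (integrable_exp_neg_mul_sq hb).mul_bdd (by fun_prop)
    (.of_forall fun x => by simpa using abs_cos_le_one (t * x))

theorem integral_exp_neg_mul_sq_mul_cos {b : ℝ} (hb : 0 < b) (t : ℝ) :
    ∫ x : ℝ, exp (-b * x ^ 2) * cos (t * x) = √(π / b) * exp (-t ^ 2 / (4 * b)) := by
  have hb' : 0 < (b : ℂ).re := by simpa using hb
  have hre : ∀ x : ℝ, exp (-b * x ^ 2) * cos (t * x)
      = RCLike.re (Complex.exp (Complex.I * t * x) * Complex.exp (-b * x ^ 2)) := by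
    intro x
    rw [show Complex.I * t * x = ((t * x : ℝ) : ℂ) * Complex.I by push_cast; ring,
      show (-b * x ^ 2 : ℂ) = ((-b * x ^ 2 : ℝ) : ℂ) by push_cast; ring, ← Complex.ofReal_exp,
      RCLike.re_to_complex, Complex.re_mul_ofReal, Complex.exp_ofReal_mul_I_re, mul_comm]
  have hint : Integrable fun x : ℝ =>
      Complex.exp (Complex.I * t * x) * Complex.exp (-b * x ^ 2) := by
    simpa only [← Complex.exp_add, add_zero, zero_add, add_comm] using
      integrable_cexp_quadratic hb' (Complex.I * t) 0
  have hsqrt : ((π : ℂ) / b) ^ (1 / 2 : ℂ) = ((√(π / b) : ℝ) : ℂ) := by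
    rw [sqrt_eq_rpow, Complex.ofReal_cpow (by positivity)]
    push_cast
    rfl
  simp_rw [hre]
  rw [integral_re hint, fourierIntegral_gaussian hb', hsqrt,
    show (-(t : ℂ) ^ 2 / (4 * b)) = ((-t ^ 2 / (4 * b) : ℝ) : ℂ) by push_cast; ring,
    ← Complex.ofReal_exp, ← Complex.ofReal_mul, RCLike.re_to_complex, Complex.ofReal_re]

theorem integral_exp_neg_mul_sq_mul_sum_cos {ι : Type*} (s : Finset ι) {b : ℝ} (hb : 0 < b)
    (w t : ι → ℝ) :
    ∫ x : ℝ, exp (-b * x ^ 2) * ∑ i ∈ s, w i * cos (t i * x)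
      = √(π / b) * ∑ i ∈ s, w i * exp (-t i ^ 2 / (4 * b)) := by
  have hterm : ∀ i, (fun x : ℝ => exp (-b * x ^ 2) * (w i * cos (t i * x)))
      = fun x => w i * (exp (-b * x ^ 2) * cos (t i * x)) := fun i => by ext; ring
  simp_rw [mul_sum]
  rw [integral_finsetSum s fun i _ => by
    rw [hterm]; exact (integrable_exp_neg_mul_sq_mul_cos hb (t i)).const_mul (w i)]
  refine sum_congr rfl fun i _ => ?_
  rw [hterm, integral_const_mul, integral_exp_neg_mul_sq_mul_cos hb]
  ring

theorem Complex.two_mul_cos_pow (N : ℕ) (x : ℂ) :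
    (2 * Complex.cos x) ^ N
      = ∑ k ∈ range (N + 1), (N.choose k : ℂ) * Complex.exp ((2 * k - N) * x * Complex.I) := by
  rw [Complex.two_cos, add_pow]
  refine sum_congr rfl fun k hk => ?_
  rw [← Complex.exp_nat_mul, ← Complex.exp_nat_mul, ← Complex.exp_add,
    Nat.cast_sub (mem_range_succ_iff.mp hk)]
  ring_nf

theorem Complex.ofReal_two_mul_cos_pow (N : ℕ) (x : ℝ) :
    (((2 * Real.cos x) ^ N : ℝ) : ℂ) = ∑ k ∈ range (N + 1),
      ((N.choose k : ℝ) : ℂ) * Complex.exp (((2 * k - N) * x : ℝ) * Complex.I) := by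
  push_cast
  exact Complex.two_mul_cos_pow N x

theorem sum_choose_mul_cos (N : ℕ) (x : ℝ) :
    ∑ k ∈ range (N + 1), (N.choose k : ℝ) * cos ((2 * k - N) * x) = (2 * cos x) ^ N := by
  have h := congrArg Complex.re (Complex.ofReal_two_mul_cos_pow N x)
  simp_rw [Complex.ofReal_re, Complex.re_sum, Complex.re_ofReal_mul,
    Complex.exp_ofReal_mul_I_re] at h
  exact h.symm

theorem sum_choose_mul_sin (N : ℕ) (x : ℝ) :
    ∑ k ∈ range (N + 1), (N.choose k : ℝ) * sin ((2 * k - N) * x) = 0 := by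
  have h := congrArg Complex.im (Complex.ofReal_two_mul_cos_pow N x)
  simp_rw [Complex.ofReal_im, Complex.im_sum, Complex.im_ofReal_mul,
    Complex.exp_ofReal_mul_I_im] at h
  exact h.symm

theorem sq_sum_mul_cos_add_sq_sum_mul_sin {ι : Type*} (s : Finset ι) (w θ : ι → ℝ) :
    (∑ i ∈ s, w i * cos (θ i)) ^ 2 + (∑ i ∈ s, w i * sin (θ i)) ^ 2
      = ∑ i ∈ s, ∑ j ∈ s, w i * w j * cos (θ i - θ j) := by
  simp_rw [sq, sum_mul_sum, ← sum_add_distrib, cos_sub]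
  exact sum_congr rfl fun i _ => sum_congr rfl fun j _ => by ring

theorem two_mul_cos_pow_two_mul (N : ℕ) (x : ℝ) :
    (2 * cos x) ^ (2 * N) = ∑ k ∈ range (N + 1), ∑ l ∈ range (N + 1),
      (N.choose k : ℝ) * N.choose l * cos (2 * (k - l : ℝ) * x) := by
  calc (2 * cos x) ^ (2 * N) = ((2 * cos x) ^ N) ^ 2 + 0 ^ 2 := by ring
    _ = (∑ k ∈ range (N + 1), (N.choose k : ℝ) * cos ((2 * k - N) * x)) ^ 2
          + (∑ k ∈ range (N + 1), (N.choose k : ℝ) * sin ((2 * k - N) * x)) ^ 2 := by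
        rw [sum_choose_mul_cos, sum_choose_mul_sin]
    _ = _ := by
        rw [sq_sum_mul_cos_add_sq_sum_mul_sin]
        exact sum_congr rfl fun k _ => sum_congr rfl fun l _ => by ring_nf

/-- For every `N ≥ 0` and `μ ≥ 0`,
`2^{-2N} Σ_{k,ℓ=0}^{N} C(N,k) C(N,ℓ) e^{-μ(k-ℓ)²} = ∫ℝ (e^{-u²}/√π) cos^{2N}(u√μ) du`
(the purity `Tr[ρ²(t)]` of the dephased state at `μ = γt`). -/
theorem purity_integral_representation (N : ℕ) (μ : ℝ) (hμ : 0 ≤ μ) :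
    (1 / (2 : ℝ) ^ (2 * N)) * ∑ k ∈ Finset.range (N + 1), ∑ ℓ ∈ Finset.range (N + 1),
        (N.choose k : ℝ) * (N.choose ℓ : ℝ) * Real.exp (-μ * ((k : ℝ) - (ℓ : ℝ)) ^ 2)
      = ∫ u : ℝ, (Real.exp (-u ^ 2) / Real.sqrt Real.pi) *
          Real.cos (u * Real.sqrt μ) ^ (2 * N) := by
  have hintegrand : ∀ u : ℝ, exp (-u ^ 2) / √π * cos (u * √μ) ^ (2 * N)
      = (√π * 2 ^ (2 * N))⁻¹ * (exp (-1 * u ^ 2) * ∑ p ∈ range (N + 1) ×ˢ range (N + 1),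
          (N.choose p.1 : ℝ) * N.choose p.2 * cos (2 * (p.1 - p.2 : ℝ) * √μ * u)) := by
    intro u
    have h := two_mul_cos_pow_two_mul N (u * √μ)
    rw [mul_pow] at h
    simp_rw [sum_product, mul_assoc _ √μ u, mul_comm √μ u, ← h]
    field_simp
  have hexponent : ∀ k l : ℕ, -(2 * (k - l : ℝ) * √μ) ^ 2 / (4 * 1) = -μ * (k - l : ℝ) ^ 2 := by
    intro k l
    rw [mul_pow, sq_sqrt hμ]
    ring
  simp_rw [hintegrand]
  rw [integral_const_mul, integral_exp_neg_mul_sq_mul_sum_cos _ one_pos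
      (fun p : ℕ × ℕ => (N.choose p.1 : ℝ) * N.choose p.2)
      (fun p : ℕ × ℕ => 2 * (p.1 - p.2 : ℝ) * √μ), sum_product]
  simp_rw [hexponent, div_one]
  field_simp
end

section
/- For every natural number N ≥ 1 and every μ > 0, I₂(μ) := Σ_{k,ℓ=0}^{N} binom(N,k) binom(N,ℓ) (k−ℓ)⁴ e^{-μ(k−ℓ)²} satisfies I₂(μ) = d²I(μ)/dμ² = (N·2^{2N}/(2μ√μ)) ∫_{-∞}^{+∞} (e^{-u²}/√π) u cos^{2N−1}(u√μ) sin(u√μ) du + (N(2N−1)·2^{2N}/(2μ)) ∫_{-∞}^{+∞} (e^{-u²}/√π) u² cos^{2N−2}(u√μ) sin²(u√μ) du − (N·2^{2N}/(2μ)) ∫_{-∞}^{+∞} (e^{-u²}/√π) u² cos^{2N}(u√μ) du, where I(μ) = Σ_{k,ℓ=0}^{N} binom(N,k) binom(N,ℓ) e^{-μ(k−ℓ)²}. -/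
/-!
Put `F(x) = 2^{2N} cos^{2N} x`, which equals `∑_{k,ℓ} C(N,k) C(N,ℓ) cos (2(k-ℓ)x)` by expanding
`|1 + e^{2ix}|^{2N}`. Differentiating this identity twice expresses `cos^{2N-1} sin` and
`cos^{2N-2} sin²` through trigonometric sums over the same frequencies `2(k-ℓ)`, and the three
integrals combine into `(1/4μ) ∫ g(u) (u² F''(u√μ) - (u/√μ) F'(u√μ)) du` with
`g(u) = e^{-u²}/√π`, i.e. into `d²/dμ² ∫ g(u) F(u√μ) du`. Frequency by frequency, the Gaussian
moments `∫ g(u) u sin(bu) = (b/2) e^{-b²/4}` and `∫ g(u) u² cos(bu) = (1/2 - b²/4) e^{-b²/4}`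
(integration by parts against `∫ g(u) cos(bu) = e^{-b²/4}`) evaluate this to
`∑_{k,ℓ} C(N,k) C(N,ℓ) (k-ℓ)⁴ e^{-μ(k-ℓ)²}`, the termwise second derivative of `I`.
-/

open MeasureTheory Real Finset

namespace PuritySum

lemma integrable_pow_mul_exp_neg_sq_mul (k : ℕ) {f : ℝ → ℝ} {C : ℝ} (hf : Continuous f)
    (hC : ∀ x, |f x| ≤ C) : Integrable fun x : ℝ => x ^ k * exp (-x ^ 2) * f x := by
  have h := integrable_rpow_mul_exp_neg_mul_sq (b := 1) one_pos (s := k)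
    (by linarith [k.cast_nonneg (α := ℝ)])
  simp only [rpow_natCast, neg_mul, one_mul] at h
  exact h.mul_bdd hf.aestronglyMeasurable (ae_of_all _ hC)

lemma integrable_pow_mul_exp_neg_sq_mul_cos (k : ℕ) (b : ℝ) :
    Integrable fun x : ℝ => x ^ k * exp (-x ^ 2) * cos (b * x) :=
  integrable_pow_mul_exp_neg_sq_mul k (by fun_prop) fun _ => abs_cos_le_one _

lemma integrable_pow_mul_exp_neg_sq_mul_sin (k : ℕ) (b : ℝ) :
    Integrable fun x : ℝ => x ^ k * exp (-x ^ 2) * sin (b * x) :=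
  integrable_pow_mul_exp_neg_sq_mul k (by fun_prop) fun _ => abs_sin_le_one _

lemma integral_exp_neg_sq_mul_cos (b : ℝ) :
    ∫ x : ℝ, exp (-x ^ 2) * cos (b * x) = √π * exp (-b ^ 2 / 4) := by
  have hsqrt : (π : ℂ) ^ (1 / 2 : ℂ) = ((√π : ℝ) : ℂ) := by
    rw [sqrt_eq_rpow, Complex.ofReal_cpow pi_pos.le]; norm_num
  have hC : ∫ x : ℝ, Complex.exp (-1 * x ^ 2 + b * Complex.I * x + 0)
      = ((√π * exp (-b ^ 2 / 4) : ℝ) : ℂ) := by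
    rw [integral_cexp_quadratic (by simp), neg_neg, div_one, hsqrt]
    push_cast
    congr 2
    rw [mul_pow, Complex.I_sq]
    ring
  have h := (integral_re (integrable_cexp_quadratic (b := 1) (by simp) _ _)).trans
    (congrArg Complex.re hC)
  simpa [Complex.exp_re, ← Complex.ofReal_pow] using h

lemma hasDerivAt_neg_exp_neg_sq_div_two (x : ℝ) :
    HasDerivAt (fun x => -exp (-x ^ 2) / 2) (x * exp (-x ^ 2)) x := by
  refine ((hasDerivAt_pow 2 x).fun_neg.exp.fun_neg.div_const 2).congr_deriv ?_
  ring

lemma integral_mul_exp_neg_sq_mul_sin (b : ℝ) :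
    ∫ x : ℝ, x * exp (-x ^ 2) * sin (b * x) = b / 2 * √π * exp (-b ^ 2 / 4) := by
  have h := integral_mul_deriv_eq_deriv_mul_of_integrable
    (u := fun x => sin (b * x)) (u' := fun x => b * cos (b * x))
    (v := fun x => -exp (-x ^ 2) / 2) (v' := fun x => x * exp (-x ^ 2))
    (fun x _ => ((hasDerivAt_id' x).const_mul b).sin.congr_deriv (by ring))
    (fun x _ => hasDerivAt_neg_exp_neg_sq_div_two x)
    ((integrable_pow_mul_exp_neg_sq_mul_sin 1 b).congr
      (.of_forall fun x => by simp only [Pi.mul_apply]; ring))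
    (((integrable_pow_mul_exp_neg_sq_mul_cos 0 b).const_mul (-b / 2)).congr
      (.of_forall fun x => by simp only [Pi.mul_apply]; ring))
    (((integrable_pow_mul_exp_neg_sq_mul_sin 0 b).const_mul (-1 / 2)).congr
      (.of_forall fun x => by simp only [Pi.mul_apply]; ring))
  calc ∫ x : ℝ, x * exp (-x ^ 2) * sin (b * x)
      = ∫ x : ℝ, sin (b * x) * (x * exp (-x ^ 2)) := by congr 1; ext x; ring
    _ = b / 2 * ∫ x : ℝ, exp (-x ^ 2) * cos (b * x) := by
      rw [h, ← integral_const_mul, ← integral_neg]; congr 1; ext x; ring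
    _ = _ := by rw [integral_exp_neg_sq_mul_cos]; ring

lemma integral_sq_mul_exp_neg_sq_mul_cos (b : ℝ) :
    ∫ x : ℝ, x ^ 2 * exp (-x ^ 2) * cos (b * x) =
      (1 / 2 - b ^ 2 / 4) * √π * exp (-b ^ 2 / 4) := by
  have h := integral_mul_deriv_eq_deriv_mul_of_integrable
    (u := fun x => x * cos (b * x)) (u' := fun x => cos (b * x) - x * (b * sin (b * x)))
    (v := fun x => -exp (-x ^ 2) / 2) (v' := fun x => x * exp (-x ^ 2))
    (fun x _ => by
      refine ((hasDerivAt_id' x).fun_mul ((hasDerivAt_id' x).const_mul b).cos).congr_deriv ?_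
      ring)
    (fun x _ => hasDerivAt_neg_exp_neg_sq_div_two x)
    ((integrable_pow_mul_exp_neg_sq_mul_cos 2 b).congr
      (.of_forall fun x => by simp only [Pi.mul_apply]; ring))
    ((((integrable_pow_mul_exp_neg_sq_mul_cos 0 b).const_mul (-1 / 2)).add
      ((integrable_pow_mul_exp_neg_sq_mul_sin 1 b).const_mul (b / 2))).congr
      (.of_forall fun x => by simp only [Pi.mul_apply, Pi.add_apply]; ring))
    (((integrable_pow_mul_exp_neg_sq_mul_cos 1 b).const_mul (-1 / 2)).congr
      (.of_forall fun x => by simp only [Pi.mul_apply]; ring))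
  calc ∫ x : ℝ, x ^ 2 * exp (-x ^ 2) * cos (b * x)
      = ∫ x : ℝ, x * cos (b * x) * (x * exp (-x ^ 2)) := by congr 1; ext x; ring
    _ = 1 / 2 * (∫ x : ℝ, exp (-x ^ 2) * cos (b * x))
          - b / 2 * ∫ x : ℝ, x * exp (-x ^ 2) * sin (b * x) := by
      rw [h, ← integral_const_mul, ← integral_const_mul, ← integral_sub, ← integral_neg]
      · congr 1; ext x; ring
      · exact ((integrable_pow_mul_exp_neg_sq_mul_cos 0 b).const_mul (1 / 2)).congr
          (.of_forall fun x => by ring)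
      · exact ((integrable_pow_mul_exp_neg_sq_mul_sin 1 b).const_mul (b / 2)).congr
          (.of_forall fun x => by ring)
    _ = _ := by rw [integral_exp_neg_sq_mul_cos, integral_mul_exp_neg_sq_mul_sin]; ring

section WeightedSums

variable {ι : Type*} (s : Finset ι) (w a : ι → ℝ)

lemma hasDerivAt_sum_mul_exp_neg_mul (m : ℝ) :
    HasDerivAt (fun m => ∑ i ∈ s, w i * exp (-m * a i))
      (∑ i ∈ s, w i * -a i * exp (-m * a i)) m :=
  HasDerivAt.fun_sum fun i _ =>
    (((hasDerivAt_neg' m).mul_const (a i)).exp.const_mul (w i)).congr_deriv (by ring)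

lemma deriv_deriv_sum_mul_exp_neg_mul (μ : ℝ) :
    deriv (deriv fun m => ∑ i ∈ s, w i * exp (-m * a i)) μ =
      ∑ i ∈ s, w i * a i ^ 2 * exp (-μ * a i) := by
  have h : deriv (fun m => ∑ i ∈ s, w i * exp (-m * a i)) =
      fun m => ∑ i ∈ s, (w i * -a i) * exp (-m * a i) :=
    funext fun m => (hasDerivAt_sum_mul_exp_neg_mul s w a m).deriv
  rw [h, (hasDerivAt_sum_mul_exp_neg_mul s _ a μ).deriv]
  exact sum_congr rfl fun i _ => by ring

lemma hasDerivAt_sum_mul_cos (x : ℝ) :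
    HasDerivAt (fun x => ∑ i ∈ s, w i * cos (a i * x))
      (-∑ i ∈ s, w i * a i * sin (a i * x)) x := by
  rw [← sum_neg_distrib]
  exact HasDerivAt.fun_sum fun i _ =>
    (((hasDerivAt_id' x).const_mul (a i)).cos.const_mul (w i)).congr_deriv (by ring)

lemma hasDerivAt_sum_mul_sin (x : ℝ) :
    HasDerivAt (fun x => ∑ i ∈ s, w i * sin (a i * x))
      (∑ i ∈ s, w i * a i * cos (a i * x)) x :=
  HasDerivAt.fun_sum fun i _ =>
    (((hasDerivAt_id' x).const_mul (a i)).sin.const_mul (w i)).congr_deriv (by ring)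

lemma integral_gaussian_mul_sum_sin_sub_sum_cos {c : ℝ} (hc : c ≠ 0) :
    ∫ u : ℝ, exp (-u ^ 2) / √π *
      (u / c * ∑ i ∈ s, w i * a i * sin (a i * (u * c)) -
        u ^ 2 * ∑ i ∈ s, w i * a i * a i * cos (a i * (u * c))) =
      c ^ 2 / 4 * ∑ i ∈ s, w i * a i ^ 4 * exp (-(a i * c) ^ 2 / 4) := by
  have hsin (b : ℝ) : Integrable fun u : ℝ => u * exp (-u ^ 2) * sin (b * u) := by
    simpa using integrable_pow_mul_exp_neg_sq_mul_sin 1 b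
  have hcos (b : ℝ) := integrable_pow_mul_exp_neg_sq_mul_cos 2 b
  calc _ = ∫ u : ℝ, ∑ i ∈ s, (w i * a i / (c * √π) * (u * exp (-u ^ 2) * sin (a i * c * u)) -
        w i * a i * a i / √π * (u ^ 2 * exp (-u ^ 2) * cos (a i * c * u))) := by
        congr 1; ext u
        rw [mul_sum, mul_sum, ← sum_sub_distrib, mul_sum]
        refine sum_congr rfl fun i _ => ?_
        rw [mul_comm u c, ← mul_assoc]
        field_simp
    _ = ∑ i ∈ s, (w i * a i / (c * √π) * (a i * c / 2 * √π * exp (-(a i * c) ^ 2 / 4)) -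
        w i * a i * a i / √π * ((1 / 2 - (a i * c) ^ 2 / 4) * √π * exp (-(a i * c) ^ 2 / 4))) := by
        rw [integral_finsetSum]
        · refine sum_congr rfl fun i _ => ?_
          rw [integral_sub ((hsin _).const_mul _) ((hcos _).const_mul _), integral_const_mul,
            integral_const_mul, integral_mul_exp_neg_sq_mul_sin, integral_sq_mul_exp_neg_sq_mul_cos]
        · exact fun i _ => ((hsin _).const_mul _).sub ((hcos _).const_mul _)
    _ = _ := by
        rw [mul_sum]
        refine sum_congr rfl fun i _ => ?_
        field_simp
        ring

end WeightedSums

lemma sum_choose_mul_choose_mul_cexp (N : ℕ) (x : ℝ) :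
    ∑ p ∈ range (N + 1) ×ˢ range (N + 1), (N.choose p.1 : ℂ) * N.choose p.2 *
      Complex.exp ((2 * ((p.1 : ℝ) - p.2) * x : ℝ) * Complex.I) =
      (2 * Complex.cos x) ^ (2 * N) := by
  set y := Complex.exp (x * Complex.I)
  have hy : y ≠ 0 := Complex.exp_ne_zero _
  have hfreq (k ℓ : ℕ) : Complex.exp ((2 * ((k : ℝ) - ℓ) * x : ℝ) * Complex.I) =
      (y ^ 2) ^ k * (y⁻¹ ^ 2) ^ ℓ := by
    rw [← pow_mul, ← pow_mul, ← Complex.exp_neg, ← Complex.exp_nat_mul, ← Complex.exp_nat_mul,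
      ← Complex.exp_add]
    push_cast; ring_nf
  calc _ = (∑ k ∈ range (N + 1), (y ^ 2) ^ k * 1 ^ (N - k) * N.choose k) *
        ∑ ℓ ∈ range (N + 1), (y⁻¹ ^ 2) ^ ℓ * 1 ^ (N - ℓ) * N.choose ℓ := by
        rw [sum_product, sum_mul_sum]
        refine sum_congr rfl fun k _ => sum_congr rfl fun ℓ _ => ?_
        rw [hfreq]; ring
    _ = ((y + y⁻¹) ^ 2) ^ N := by
        rw [← add_pow, ← add_pow, ← mul_pow]; congr 1; field_simp; ring
    _ = _ := by
        rw [Complex.two_cos, ← pow_mul, neg_mul, Complex.exp_neg]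

lemma sum_choose_mul_choose_mul_cos (N : ℕ) (x : ℝ) :
    ∑ p ∈ range (N + 1) ×ˢ range (N + 1), (N.choose p.1 : ℝ) * N.choose p.2 *
      cos (2 * ((p.1 : ℝ) - p.2) * x) = 2 ^ (2 * N) * cos x ^ (2 * N) := by
  have h := congrArg Complex.re (sum_choose_mul_choose_mul_cexp N x)
  rw [← Complex.ofReal_cos, ← Complex.ofReal_ofNat, ← Complex.ofReal_mul, ← Complex.ofReal_pow,
    Complex.ofReal_re, Complex.re_sum] at h
  rw [← mul_pow, ← h]
  refine sum_congr rfl fun p _ => ?_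
  rw [← Complex.ofReal_natCast, ← Complex.ofReal_natCast, ← Complex.ofReal_mul,
    Complex.re_ofReal_mul, Complex.exp_ofReal_mul_I_re]

lemma sum_choose_mul_choose_mul_sin (N : ℕ) (x : ℝ) :
    ∑ p ∈ range (N + 1) ×ˢ range (N + 1), (N.choose p.1 : ℝ) * N.choose p.2 *
      (2 * ((p.1 : ℝ) - p.2)) * sin (2 * ((p.1 : ℝ) - p.2) * x) =
      2 ^ (2 * N) * (2 * N) * cos x ^ (2 * N - 1) * sin x := by
  have h := hasDerivAt_sum_mul_cos (range (N + 1) ×ˢ range (N + 1))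
    (fun p => (N.choose p.1 : ℝ) * N.choose p.2) (fun p => 2 * ((p.1 : ℝ) - p.2)) x
  simp only [sum_choose_mul_choose_mul_cos] at h
  have h' := ((hasDerivAt_cos x).pow (2 * N)).const_mul ((2 : ℝ) ^ (2 * N))
  have := h.unique h'
  push_cast at this
  linear_combination -this

lemma sum_choose_mul_choose_mul_sq_mul_cos (N : ℕ) (hN : 1 ≤ N) (x : ℝ) :
    ∑ p ∈ range (N + 1) ×ˢ range (N + 1), (N.choose p.1 : ℝ) * N.choose p.2 *
      (2 * ((p.1 : ℝ) - p.2)) * (2 * ((p.1 : ℝ) - p.2)) * cos (2 * ((p.1 : ℝ) - p.2) * x) =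
      2 ^ (2 * N) * (2 * N * cos x ^ (2 * N) -
        2 * N * (2 * N - 1) * cos x ^ (2 * N - 2) * sin x ^ 2) := by
  have h := hasDerivAt_sum_mul_sin (range (N + 1) ×ˢ range (N + 1))
    (fun p => (N.choose p.1 : ℝ) * N.choose p.2 * (2 * ((p.1 : ℝ) - p.2)))
    (fun p => 2 * ((p.1 : ℝ) - p.2)) x
  simp only [sum_choose_mul_choose_mul_sin] at h
  have h' := ((((hasDerivAt_cos x).fun_pow (2 * N - 1)).const_mul
    ((2 : ℝ) ^ (2 * N) * (2 * N))).fun_mul (hasDerivAt_sin x))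
  have := h.unique h'
  obtain ⟨M, rfl⟩ := Nat.exists_eq_add_of_le' hN
  rw [show 2 * (M + 1) - 1 = 2 * M + 1 by omega] at this
  rw [show 2 * (M + 1) - 2 = 2 * M by omega]
  push_cast at this ⊢
  linear_combination this

lemma integrable_gaussian_mul_pow_mul_cos_pow_mul_sin_pow (k m n : ℕ) (c : ℝ) :
    Integrable fun u : ℝ => exp (-u ^ 2) / √π * u ^ k * (cos (u * c) ^ m * sin (u * c) ^ n) := by
  refine ((integrable_pow_mul_exp_neg_sq_mul k (f := fun u => cos (u * c) ^ m * sin (u * c) ^ n)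
    (C := 1) (by fun_prop) fun u => ?_).div_const √π).congr (.of_forall fun u => by ring)
  rw [abs_mul, abs_pow, abs_pow]
  exact mul_le_one₀ (pow_le_one₀ (abs_nonneg _) (abs_cos_le_one _)) (by positivity)
    (pow_le_one₀ (abs_nonneg _) (abs_sin_le_one _))

lemma purity_integrals_eq_integral_gaussian_mul_trig_sums (N : ℕ) (hN : 1 ≤ N) {μ : ℝ}
    (hμ : 0 < μ) :
    ((N : ℝ) * 2 ^ (2 * N) / (2 * μ * √μ)) *
        (∫ u : ℝ, (exp (-u ^ 2) / √π) * u * cos (u * √μ) ^ (2 * N - 1) * sin (u * √μ))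
      + ((N : ℝ) * (2 * (N : ℝ) - 1) * 2 ^ (2 * N) / (2 * μ)) *
        (∫ u : ℝ, (exp (-u ^ 2) / √π) * u ^ 2 * cos (u * √μ) ^ (2 * N - 2) * sin (u * √μ) ^ 2)
      - ((N : ℝ) * 2 ^ (2 * N) / (2 * μ)) *
        (∫ u : ℝ, (exp (-u ^ 2) / √π) * u ^ 2 * cos (u * √μ) ^ (2 * N)) =
    1 / (4 * μ) * ∫ u : ℝ, exp (-u ^ 2) / √π *
      (u / √μ * ∑ p ∈ range (N + 1) ×ˢ range (N + 1), (N.choose p.1 : ℝ) * N.choose p.2 *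
          (2 * ((p.1 : ℝ) - p.2)) * sin (2 * ((p.1 : ℝ) - p.2) * (u * √μ)) -
        u ^ 2 * ∑ p ∈ range (N + 1) ×ˢ range (N + 1), (N.choose p.1 : ℝ) * N.choose p.2 *
          (2 * ((p.1 : ℝ) - p.2)) * (2 * ((p.1 : ℝ) - p.2)) *
            cos (2 * ((p.1 : ℝ) - p.2) * (u * √μ))) := by
  have h₁ : Integrable fun u : ℝ =>
      exp (-u ^ 2) / √π * u * cos (u * √μ) ^ (2 * N - 1) * sin (u * √μ) := by
    simpa [mul_assoc] using integrable_gaussian_mul_pow_mul_cos_pow_mul_sin_pow 1 (2 * N - 1) 1 √μ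
  have h₂ : Integrable fun u : ℝ =>
      exp (-u ^ 2) / √π * u ^ 2 * cos (u * √μ) ^ (2 * N - 2) * sin (u * √μ) ^ 2 := by
    simpa [mul_assoc] using integrable_gaussian_mul_pow_mul_cos_pow_mul_sin_pow 2 (2 * N - 2) 2 √μ
  have h₃ : Integrable fun u : ℝ => exp (-u ^ 2) / √π * u ^ 2 * cos (u * √μ) ^ (2 * N) := by
    simpa using integrable_gaussian_mul_pow_mul_cos_pow_mul_sin_pow 2 (2 * N) 0 √μ
  simp only [sum_choose_mul_choose_mul_sin, sum_choose_mul_choose_mul_sq_mul_cos N hN]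
  rw [← integral_const_mul, ← integral_const_mul, ← integral_const_mul, ← integral_const_mul,
    ← integral_add (h₁.const_mul _) (h₂.const_mul _), ← integral_sub ((h₁.const_mul _).fun_add
      (h₂.const_mul _)) (h₃.const_mul _)]
  congr 1; ext u
  rw [← sq_sqrt hμ.le]
  field_simp
  ring

end PuritySum

/-- For `N ≥ 1` and `μ > 0`, the sum `I₂(μ) = Σ_{k,ℓ} C(N,k) C(N,ℓ) (k-ℓ)⁴ e^{-μ(k-ℓ)²}`
equals `d²I(μ)/dμ²` for `I(μ) = Σ_{k,ℓ} C(N,k) C(N,ℓ) e^{-μ(k-ℓ)²}`, and admits the integral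
representation
`I₂(μ) = (N·2^{2N}/(2μ√μ)) ∫ (e^{-u²}/√π) u cos^{2N-1}(u√μ) sin(u√μ) du
       + (N(2N-1)·2^{2N}/(2μ)) ∫ (e^{-u²}/√π) u² cos^{2N-2}(u√μ) sin²(u√μ) du
       − (N·2^{2N}/(2μ)) ∫ (e^{-u²}/√π) u² cos^{2N}(u√μ) du`. -/
theorem second_derivative_of_purity_sum (N : ℕ) (hN : 1 ≤ N) (μ : ℝ) (hμ : 0 < μ) :
    let I : ℝ → ℝ := fun m =>
      ∑ k ∈ Finset.range (N + 1), ∑ ℓ ∈ Finset.range (N + 1),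
        (N.choose k : ℝ) * (N.choose ℓ : ℝ) * Real.exp (-m * ((k : ℝ) - (ℓ : ℝ)) ^ 2)
    let I₂ : ℝ :=
      ∑ k ∈ Finset.range (N + 1), ∑ ℓ ∈ Finset.range (N + 1),
        (N.choose k : ℝ) * (N.choose ℓ : ℝ) * ((k : ℝ) - (ℓ : ℝ)) ^ 4 *
          Real.exp (-μ * ((k : ℝ) - (ℓ : ℝ)) ^ 2)
    deriv (deriv I) μ = I₂ ∧
    I₂ = ((N : ℝ) * 2 ^ (2 * N) / (2 * μ * Real.sqrt μ)) *
          (∫ u : ℝ, (Real.exp (-u ^ 2) / Real.sqrt Real.pi) * u *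
            Real.cos (u * Real.sqrt μ) ^ (2 * N - 1) * Real.sin (u * Real.sqrt μ))
        + ((N : ℝ) * (2 * (N : ℝ) - 1) * 2 ^ (2 * N) / (2 * μ)) *
          (∫ u : ℝ, (Real.exp (-u ^ 2) / Real.sqrt Real.pi) * u ^ 2 *
            Real.cos (u * Real.sqrt μ) ^ (2 * N - 2) * Real.sin (u * Real.sqrt μ) ^ 2)
        - ((N : ℝ) * 2 ^ (2 * N) / (2 * μ)) *
          (∫ u : ℝ, (Real.exp (-u ^ 2) / Real.sqrt Real.pi) * u ^ 2 *
            Real.cos (u * Real.sqrt μ) ^ (2 * N)) := by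
  intro I I₂
  have hI : I = fun m => ∑ p ∈ range (N + 1) ×ˢ range (N + 1),
      (N.choose p.1 : ℝ) * N.choose p.2 * exp (-m * ((p.1 : ℝ) - p.2) ^ 2) :=
    funext fun m => (sum_product' _ _ _).symm
  have hI₂ : I₂ = ∑ p ∈ range (N + 1) ×ˢ range (N + 1),
      (N.choose p.1 : ℝ) * N.choose p.2 * ((p.1 : ℝ) - p.2) ^ 4 *
        exp (-μ * ((p.1 : ℝ) - p.2) ^ 2) :=
    (sum_product' _ _ _).symm
  refine ⟨?_, ?_⟩
  · rw [hI, PuritySum.deriv_deriv_sum_mul_exp_neg_mul, hI₂]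
    simp only [← pow_mul]
  rw [PuritySum.purity_integrals_eq_integral_gaussian_mul_trig_sums N hN hμ,
    PuritySum.integral_gaussian_mul_sum_sin_sub_sum_cos _ _ _ (sqrt_pos.2 hμ).ne', hI₂,
    mul_sum, mul_sum]
  refine sum_congr rfl fun p _ => ?_
  simp only [mul_pow, sq_sqrt hμ.le]
  field_simp
  ring
end

section
/- Fix N ≥ 1 and γ > 0. For m ∈ {0, 2, 4} and t ≥ 0 define S_m(t) = 2^{-2N} Σ_{k,ℓ=0}^{N} binom(N,k) binom(N,ℓ) (k−ℓ)^m e^{-γ t (k−ℓ)²}, and define the dissipative quantum Fisher information F(t) = t² ( S₄(t)/S₀(t) − S₂(t)²/S₀(t)² ). Then lim_{t→0⁺} F(t)/t² = N(2N−1)/4. In particular, for small times F(t) = (t² N²/2)(1 − 1/(2N)) + o(t²), so F(t) scales quadratically in N, beating the shot-noise (linear-in-N) limit. -/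
/-! At `t = 0` every exponential weight is `1`, so by continuity `F(t)/t²` tends to
`S₄(0)/S₀(0) - (S₂(0)/S₀(0))²`. Writing `k - ℓ = (k - N/2) - (ℓ - N/2)` and expanding binomially
expresses `S_m(0)` through the central moments of `Binomial(N, 1/2)`, which Pascal's rule computes
by induction on `N`: the odd ones vanish, and `S₀(0) = 1`, `S₂(0) = N/2`, `S₄(0) = N(3N-1)/4`. -/

open Filter Topology Asymptotics
open Finset

theorem sum_sum_mul_mul_sub_pow {ι R : Type*} [CommRing R] (s : Finset ι) (c x : ι → R) (n : ℕ) :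
    ∑ k ∈ s, ∑ ℓ ∈ s, c k * c ℓ * (x k - x ℓ) ^ n =
      ∑ m ∈ range (n + 1), (-1) ^ (m + n) * n.choose m *
        (∑ k ∈ s, c k * x k ^ m) * ∑ ℓ ∈ s, c ℓ * x ℓ ^ (n - m) := by
  simp_rw [sub_pow, mul_sum, sum_mul]
  rw [sum_comm (s := range (n + 1)), sum_comm (s := s) (t := s)]
  refine sum_congr rfl fun ℓ _ => ?_
  rw [sum_comm]
  exact sum_congr rfl fun k _ => sum_congr rfl fun m _ => by ring

/-- `2 ^ N` times the `j`-th central moment of `Binomial(N, 1/2)`. -/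
noncomputable def binomialCentralMoment (N j : ℕ) : ℝ :=
  ∑ k ∈ range (N + 1), (N.choose k : ℝ) * ((k : ℝ) - N / 2) ^ j

theorem binomialCentralMoment_succ (N j : ℕ) :
    binomialCentralMoment (N + 1) j = ∑ k ∈ range (N + 1), (N.choose k : ℝ) *
      (((k : ℝ) - N / 2 - 1 / 2) ^ j + ((k : ℝ) - N / 2 + 1 / 2) ^ j) := by
  rw [binomialCentralMoment, sum_choose_succ_mul (fun k _ => ((k : ℝ) - (N + 1 : ℕ) / 2) ^ j),
    ← sum_add_distrib]
  refine sum_congr rfl fun k _ => ?_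
  push_cast
  ring

theorem binomialCentralMoment_zero (N : ℕ) : binomialCentralMoment N 0 = 2 ^ N := by
  simp [binomialCentralMoment, ← Nat.cast_sum, Nat.sum_range_choose]

theorem binomialCentralMoment_one (N : ℕ) : binomialCentralMoment N 1 = 0 := by
  induction N with
  | zero => simp [binomialCentralMoment]
  | succ N ih =>
    calc binomialCentralMoment (N + 1) 1 = 2 * binomialCentralMoment N 1 := by
          rw [binomialCentralMoment_succ, binomialCentralMoment, mul_sum]
          exact sum_congr rfl fun k _ => by ring
      _ = 0 := by rw [ih, mul_zero]

theorem binomialCentralMoment_two (N : ℕ) : binomialCentralMoment N 2 = N * 2 ^ N / 4 := by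
  induction N with
  | zero => simp [binomialCentralMoment]
  | succ N ih =>
    calc binomialCentralMoment (N + 1) 2 =
          2 * binomialCentralMoment N 2 + binomialCentralMoment N 0 / 2 := by
          rw [binomialCentralMoment_succ, binomialCentralMoment, binomialCentralMoment, mul_sum,
            sum_div, ← sum_add_distrib]
          exact sum_congr rfl fun k _ => by ring
      _ = (N + 1 : ℕ) * 2 ^ (N + 1) / 4 := by
          rw [ih, binomialCentralMoment_zero]; push_cast; ring

theorem binomialCentralMoment_three (N : ℕ) : binomialCentralMoment N 3 = 0 := by
  induction N with
  | zero => simp [binomialCentralMoment]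
  | succ N ih =>
    calc binomialCentralMoment (N + 1) 3 =
          2 * binomialCentralMoment N 3 + 3 / 2 * binomialCentralMoment N 1 := by
          rw [binomialCentralMoment_succ, binomialCentralMoment, binomialCentralMoment, mul_sum,
            mul_sum, ← sum_add_distrib]
          exact sum_congr rfl fun k _ => by ring
      _ = 0 := by rw [ih, binomialCentralMoment_one]; ring

theorem binomialCentralMoment_four (N : ℕ) :
    binomialCentralMoment N 4 = N * (3 * N - 2) * 2 ^ N / 16 := by
  induction N with
  | zero => simp [binomialCentralMoment]
  | succ N ih =>
    calc binomialCentralMoment (N + 1) 4 =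
          2 * binomialCentralMoment N 4 + 3 * binomialCentralMoment N 2
            + binomialCentralMoment N 0 / 8 := by
          rw [binomialCentralMoment_succ, binomialCentralMoment, binomialCentralMoment,
            binomialCentralMoment, mul_sum, mul_sum, sum_div, ← sum_add_distrib,
            ← sum_add_distrib]
          exact sum_congr rfl fun k _ => by ring
      _ = (N + 1 : ℕ) * (3 * (N + 1 : ℕ) - 2) * 2 ^ (N + 1) / 16 := by
          rw [ih, binomialCentralMoment_two, binomialCentralMoment_zero]; push_cast; ring

theorem sum_sum_choose_mul_choose_mul_sub_pow (N n : ℕ) :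
    ∑ k ∈ range (N + 1), ∑ ℓ ∈ range (N + 1),
        (N.choose k : ℝ) * (N.choose ℓ : ℝ) * ((k : ℝ) - (ℓ : ℝ)) ^ n =
      ∑ m ∈ range (n + 1), (-1) ^ (m + n) * n.choose m *
        binomialCentralMoment N m * binomialCentralMoment N (n - m) := by
  simp only [binomialCentralMoment]
  rw [← sum_sum_mul_mul_sub_pow]
  exact sum_congr rfl fun k _ => sum_congr rfl fun ℓ _ => by ring

theorem sum_sum_choose_mul_choose_mul_sub_pow_zero (N : ℕ) :
    ∑ k ∈ range (N + 1), ∑ ℓ ∈ range (N + 1),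
        (N.choose k : ℝ) * (N.choose ℓ : ℝ) * ((k : ℝ) - (ℓ : ℝ)) ^ 0 = 4 ^ N := by
  rw [sum_sum_choose_mul_choose_mul_sub_pow, show (4 : ℝ) ^ N = 2 ^ N * 2 ^ N by
    rw [← mul_pow]; norm_num]
  simp only [sum_range_one, Nat.reduceAdd, Nat.reduceSub, binomialCentralMoment_zero]
  norm_num

theorem sum_sum_choose_mul_choose_mul_sub_pow_two (N : ℕ) :
    ∑ k ∈ range (N + 1), ∑ ℓ ∈ range (N + 1),
        (N.choose k : ℝ) * (N.choose ℓ : ℝ) * ((k : ℝ) - (ℓ : ℝ)) ^ 2 = N * 4 ^ N / 2 := by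
  rw [sum_sum_choose_mul_choose_mul_sub_pow, show (4 : ℝ) ^ N = 2 ^ N * 2 ^ N by
    rw [← mul_pow]; norm_num]
  simp only [sum_range_succ, sum_range_zero, Nat.reduceAdd, Nat.reduceSub,
    binomialCentralMoment_zero, binomialCentralMoment_one, binomialCentralMoment_two]
  norm_num
  ring

theorem sum_sum_choose_mul_choose_mul_sub_pow_four (N : ℕ) :
    ∑ k ∈ range (N + 1), ∑ ℓ ∈ range (N + 1),
        (N.choose k : ℝ) * (N.choose ℓ : ℝ) * ((k : ℝ) - (ℓ : ℝ)) ^ 4 =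
      N * (3 * N - 1) * 4 ^ N / 4 := by
  rw [sum_sum_choose_mul_choose_mul_sub_pow, show (4 : ℝ) ^ N = 2 ^ N * 2 ^ N by
    rw [← mul_pow]; norm_num]
  simp only [sum_range_succ, sum_range_zero, Nat.reduceAdd, Nat.reduceSub,
    binomialCentralMoment_zero, binomialCentralMoment_one, binomialCentralMoment_two,
    binomialCentralMoment_three, binomialCentralMoment_four]
  norm_num [Nat.choose]
  ring

theorem isLittleO_sub_mul_of_tendsto_div {α : Type*} {l : Filter α} {f g : α → ℝ} {L : ℝ}
    (hg : ∀ᶠ x in l, g x ≠ 0) (h : Tendsto (fun x => f x / g x) l (𝓝 L)) :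
    (fun x => f x - L * g x) =o[l] g := by
  refine (isLittleO_iff_tendsto' (hg.mono fun x hx h => absurd h hx)).2 ?_
  rw [← sub_self L]
  refine (h.sub_const L).congr' (hg.mono fun x hx => ?_)
  dsimp only
  rw [sub_div, mul_div_cancel_right₀ _ hx]

theorem dissipative_QFI_small_time_scaling_general (N : ℕ) (γ : ℝ) :
    let S : ℕ → ℝ → ℝ := fun m t =>
      (1 / (2 : ℝ) ^ (2 * N)) * ∑ k ∈ Finset.range (N + 1), ∑ ℓ ∈ Finset.range (N + 1),
        (N.choose k : ℝ) * (N.choose ℓ : ℝ) * ((k : ℝ) - (ℓ : ℝ)) ^ m *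
          Real.exp (-γ * t * ((k : ℝ) - (ℓ : ℝ)) ^ 2)
    let F : ℝ → ℝ := fun t => t ^ 2 * (S 4 t / S 0 t - (S 2 t) ^ 2 / (S 0 t) ^ 2)
    Tendsto (fun t => F t / t ^ 2) (nhdsWithin 0 (Set.Ioi 0))
      (nhds ((N : ℝ) * (2 * (N : ℝ) - 1) / 4)) ∧
    (fun t => F t - (t ^ 2 * (N : ℝ) ^ 2 / 2) * (1 - 1 / (2 * (N : ℝ))))
      =o[nhdsWithin 0 (Set.Ioi 0)] (fun t => t ^ 2) := by
  intro S F
  have hS : ∀ m, S m 0 = (∑ k ∈ range (N + 1), ∑ ℓ ∈ range (N + 1),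
      (N.choose k : ℝ) * (N.choose ℓ : ℝ) * ((k : ℝ) - (ℓ : ℝ)) ^ m) / 4 ^ N := fun m => by
    simp only [S, mul_zero, zero_mul, Real.exp_zero, mul_one, pow_mul, div_eq_inv_mul]
    norm_num
  have hS0 : S 0 0 = 1 := by
    rw [hS, sum_sum_choose_mul_choose_mul_sub_pow_zero, div_self (by positivity)]
  have hS2 : S 2 0 = N / 2 := by rw [hS, sum_sum_choose_mul_choose_mul_sub_pow_two]; field_simp
  have hS4 : S 4 0 = N * (3 * N - 1) / 4 := by
    rw [hS, sum_sum_choose_mul_choose_mul_sub_pow_four]; field_simp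
  have hcont : ∀ m, Continuous (S m) := fun m => by fun_prop
  have hR : Tendsto (fun t => S 4 t / S 0 t - S 2 t ^ 2 / S 0 t ^ 2) (𝓝[>] 0)
      (𝓝 (N * (2 * N - 1) / 4)) := by
    have h0 : S 0 0 ≠ 0 := by rw [hS0]; exact one_ne_zero
    have hcontAt := ((hcont 4).continuousAt.div (hcont 0).continuousAt h0).sub
      (((hcont 2).continuousAt.pow 2).div ((hcont 0).continuousAt.pow 2) (pow_ne_zero 2 h0))
    have hval : (N : ℝ) * (2 * N - 1) / 4 = S 4 0 / S 0 0 - S 2 0 ^ 2 / S 0 0 ^ 2 := by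
      rw [hS0, hS2, hS4]; ring
    rw [hval]
    exact hcontAt.tendsto.mono_left nhdsWithin_le_nhds
  have hFR : (fun t => S 4 t / S 0 t - S 2 t ^ 2 / S 0 t ^ 2) =ᶠ[𝓝[>] 0]
      fun t => F t / t ^ 2 := by
    filter_upwards [self_mem_nhdsWithin] with t (ht : 0 < t)
    simp only [F]; field_simp
  have hlim := hR.congr' hFR
  refine ⟨hlim, ?_⟩
  have ht2 : ∀ᶠ t in 𝓝[>] (0 : ℝ), t ^ 2 ≠ 0 := by
    filter_upwards [self_mem_nhdsWithin] with t (ht : 0 < t) using pow_ne_zero 2 ht.ne'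
  convert isLittleO_sub_mul_of_tendsto_div ht2 hlim using 3 with t
  rcases eq_or_ne (N : ℝ) 0 with hN | hN
  · simp [hN]
  · field_simp; ring

/-- Fix `N ≥ 1` and `γ > 0`, and for `m ∈ {0,2,4}` set
`S_m(t) = 2^{-2N} Σ_{k,ℓ} C(N,k) C(N,ℓ) (k-ℓ)^m e^{-γt(k-ℓ)²}` and
`F(t) = t² (S₄(t)/S₀(t) − S₂(t)²/S₀(t)²)` (the dissipative quantum Fisher information).
Then `lim_{t→0⁺} F(t)/t² = N(2N-1)/4`; in particular
`F(t) = (t²N²/2)(1 − 1/(2N)) + o(t²)` as `t → 0⁺`, beating the shot-noise limit. -/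
theorem dissipative_QFI_small_time_scaling (N : ℕ) (hN : 1 ≤ N) (γ : ℝ) (hγ : 0 < γ) :
    let S : ℕ → ℝ → ℝ := fun m t =>
      (1 / (2 : ℝ) ^ (2 * N)) * ∑ k ∈ Finset.range (N + 1), ∑ ℓ ∈ Finset.range (N + 1),
        (N.choose k : ℝ) * (N.choose ℓ : ℝ) * ((k : ℝ) - (ℓ : ℝ)) ^ m *
          Real.exp (-γ * t * ((k : ℝ) - (ℓ : ℝ)) ^ 2)
    let F : ℝ → ℝ := fun t => t ^ 2 * (S 4 t / S 0 t - (S 2 t) ^ 2 / (S 0 t) ^ 2)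
    Tendsto (fun t => F t / t ^ 2) (nhdsWithin 0 (Set.Ioi 0))
      (nhds ((N : ℝ) * (2 * (N : ℝ) - 1) / 4)) ∧
    (fun t => F t - (t ^ 2 * (N : ℝ) ^ 2 / 2) * (1 - 1 / (2 * (N : ℝ))))
      =o[nhdsWithin 0 (Set.Ioi 0)] (fun t => t ^ 2) :=
  dissipative_QFI_small_time_scaling_general N γ
end
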